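/- arXiv:2111.02700 — 5 statements merged into one kernel-verified Lean document; each statement's English description precedes it below -/
import Mathlib

section
/- Let U := CCZ·(H⊗H⊗H) on (ℂ²)^{⊗3}, and define O₁ := Σ_{i∈{0,1}} |i⟩⟨i|⊗σ_Z^i⊗σ_X, O₂ := Σ_{i∈{0,1}} |i⟩⟨i|⊗σ_X⊗σ_Z^i, O₃ := σ_X⊗(Σ_{i∈{0,1}} |i⟩⟨i|⊗σ_Z^i). Then U(σ_Z⊗I⊗I)U† = O₃, U(I⊗σ_Z⊗I)U† = O₂, and U(I⊗I⊗σ_Z)U† = O₁. -/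
open Matrix Kronecker

noncomputable section

/-- Three-qubit index type. -/
abbrev Q3 := Fin 2 × Fin 2 × Fin 2

/-- The `CCZ` gate: `CCZ|a,b,c⟩ = (−1)^{abc}|a,b,c⟩`. -/
def CCZ : Matrix Q3 Q3 ℂ :=
  Matrix.diagonal fun p => (-1 : ℂ) ^ (p.1.val * p.2.1.val * p.2.2.val)

/-- Pauli `Z`. -/
def sZ : Matrix (Fin 2) (Fin 2) ℂ := !![1, 0; 0, -1]

/-- Pauli `X`. -/
def sX : Matrix (Fin 2) (Fin 2) ℂ := !![0, 1; 1, 0]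

/-- The Hadamard gate. -/
def Hgate : Matrix (Fin 2) (Fin 2) ℂ := (Real.sqrt 2 : ℂ)⁻¹ • !![1, 1; 1, -1]

/-- `U := CCZ·(H⊗H⊗H)`. -/
def Ugate : Matrix Q3 Q3 ℂ := CCZ * (Hgate ⊗ₖ (Hgate ⊗ₖ Hgate))

/-- `|i⟩⟨i|` on one qubit. -/
def projZ (i : Fin 2) : Matrix (Fin 2) (Fin 2) ℂ := Matrix.single i i 1

/-- `O₁ := Σ_i |i⟩⟨i|⊗σ_Z^i⊗σ_X`. -/
def O1 : Matrix Q3 Q3 ℂ := ∑ i : Fin 2, projZ i ⊗ₖ ((sZ ^ i.val) ⊗ₖ sX)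

/-- `O₂ := Σ_i |i⟩⟨i|⊗σ_X⊗σ_Z^i`. -/
def O2 : Matrix Q3 Q3 ℂ := ∑ i : Fin 2, projZ i ⊗ₖ (sX ⊗ₖ (sZ ^ i.val))

/-- `O₃ := σ_X⊗(Σ_i |i⟩⟨i|⊗σ_Z^i)`. -/
def O3 : Matrix Q3 Q3 ℂ := ∑ i : Fin 2, sX ⊗ₖ (projZ i ⊗ₖ (sZ ^ i.val))

/-! Auxiliary material -/

/-- Unnormalized Hadamard. -/
def Mun : Matrix (Fin 2) (Fin 2) ℂ := !![1, 1; 1, -1]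

/-- Unnormalized `U`. -/
def W : Matrix Q3 Q3 ℂ := CCZ * (Mun ⊗ₖ (Mun ⊗ₖ Mun))

lemma Mval (a b : Fin 2) : Mun a b = if a = 1 ∧ b = 1 then -1 else 1 := by
  fin_cases a <;> fin_cases b <;> simp [Mun]

lemma Mstar (a b : Fin 2) : star (Mun a b) = Mun a b := by
  fin_cases a <;> fin_cases b <;> simp [Mun]

lemma sZval (a b : Fin 2) : sZ a b = if a = b then (if a = 1 then -1 else 1) else 0 := by
  fin_cases a <;> fin_cases b <;> simp [sZ]

lemma sXval (a b : Fin 2) : sX a b = if a = b then 0 else 1 := by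
  fin_cases a <;> fin_cases b <;> simp [sX]

lemma projZval (i a b : Fin 2) : projZ i a b = if a = i ∧ b = i then 1 else 0 := by
  simp [projZ, Matrix.single]; aesop

lemma sZpowval (i a b : Fin 2) : (sZ ^ i.val) a b =
    if a = b then (if a = 1 ∧ i = 1 then -1 else 1) else 0 := by
  fin_cases i <;> fin_cases a <;> fin_cases b <;> simp [sZ, Matrix.one_apply]

lemma Wapply (a b c d e f : Fin 2) :
    W (a,b,c) (d,e,f) = (-1:ℂ)^(a.val*b.val*c.val) * (Mun a d * (Mun b e * Mun c f)) := by
  simp [W, CCZ, Matrix.diagonal_mul, Matrix.kroneckerMap_apply]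

lemma Wstar (p q : Q3) : star (W p q) = W p q := by
  obtain ⟨a,b,c⟩ := p; obtain ⟨d,e,f⟩ := q
  simp [Wapply, star_pow, Mstar]

set_option maxHeartbeats 1000000 in
lemma hW3 : W * (sZ ⊗ₖ ((1 : Matrix (Fin 2) (Fin 2) ℂ) ⊗ₖ 1)) = O3 * W := by
  ext ⟨a,b,c⟩ ⟨d,e,f⟩
  simp only [Matrix.mul_apply, Fintype.sum_prod_type, Fin.sum_univ_two, Wapply,
    Matrix.kroneckerMap_apply, O3, Finset.sum_apply, Matrix.sum_apply]
  fin_cases a <;> fin_cases b <;> fin_cases c <;> fin_cases d <;> fin_cases e <;> fin_cases f <;>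
    norm_num [Mval, sZval, sXval, projZval, sZpowval, Matrix.one_apply]

set_option maxHeartbeats 1000000 in
lemma hW2 : W * ((1 : Matrix (Fin 2) (Fin 2) ℂ) ⊗ₖ (sZ ⊗ₖ 1)) = O2 * W := by
  ext ⟨a,b,c⟩ ⟨d,e,f⟩
  simp only [Matrix.mul_apply, Fintype.sum_prod_type, Fin.sum_univ_two, Wapply,
    Matrix.kroneckerMap_apply, O2, Finset.sum_apply, Matrix.sum_apply]
  fin_cases a <;> fin_cases b <;> fin_cases c <;> fin_cases d <;> fin_cases e <;> fin_cases f <;>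
    norm_num [Mval, sZval, sXval, projZval, sZpowval, Matrix.one_apply]

set_option maxHeartbeats 1000000 in
lemma hW1 : W * ((1 : Matrix (Fin 2) (Fin 2) ℂ) ⊗ₖ ((1 : Matrix (Fin 2) (Fin 2) ℂ) ⊗ₖ sZ)) = O1 * W := by
  ext ⟨a,b,c⟩ ⟨d,e,f⟩
  simp only [Matrix.mul_apply, Fintype.sum_prod_type, Fin.sum_univ_two, Wapply,
    Matrix.kroneckerMap_apply, O1, Finset.sum_apply, Matrix.sum_apply]
  fin_cases a <;> fin_cases b <;> fin_cases c <;> fin_cases d <;> fin_cases e <;> fin_cases f <;>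
    norm_num [Mval, sZval, sXval, projZval, sZpowval, Matrix.one_apply]

set_option maxHeartbeats 1000000 in
lemma hWW : W * Wᴴ = (8:ℂ) • 1 := by
  ext ⟨a,b,c⟩ ⟨d,e,f⟩
  simp only [Matrix.mul_apply, Matrix.conjTranspose_apply, Wstar, Fintype.sum_prod_type,
    Fin.sum_univ_two, Wapply, Matrix.smul_apply, Matrix.one_apply, smul_eq_mul]
  fin_cases a <;> fin_cases b <;> fin_cases c <;> fin_cases d <;> fin_cases e <;> fin_cases f <;>
    norm_num [Mval] <;> norm_num [Prod.ext_iff]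

lemma hU : Ugate = ((Real.sqrt 2 : ℂ)⁻¹)^3 • W := by
  have : Hgate ⊗ₖ (Hgate ⊗ₖ Hgate)
      = ((Real.sqrt 2 : ℂ)⁻¹)^3 • (Mun ⊗ₖ (Mun ⊗ₖ Mun)) := by
    simp only [Hgate, Mun, Matrix.smul_kronecker, Matrix.kronecker_smul, smul_smul]
    ring_nf
  rw [Ugate, this, W, Matrix.mul_smul]

lemma sfac : ((Real.sqrt 2 : ℂ)⁻¹)^3 * ((Real.sqrt 2 : ℂ)⁻¹)^3 * 8 = 1 := by
  have h2 : (Real.sqrt 2 : ℂ)^2 = 2 := by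
    rw [← Complex.ofReal_pow]
    norm_num [Real.sq_sqrt]
  have hne : (Real.sqrt 2 : ℂ) ≠ 0 := by
    intro h
    rw [h] at h2; norm_num at h2
  field_simp
  ring_nf
  rw [show ((Real.sqrt 2:ℂ))^6 = ((Real.sqrt 2:ℂ)^2)^3 by ring, h2]
  norm_num

lemma conj_eq (A O : Matrix Q3 Q3 ℂ) (h : W * A = O * W) :
    Ugate * A * Ugateᴴ = O := by
  have hUH : Ugateᴴ = ((Real.sqrt 2 : ℂ)⁻¹)^3 • Wᴴ := by
    rw [hU, Matrix.conjTranspose_smul]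
    congr 1
    simp [star_pow, star_inv₀, Complex.conj_ofReal]
  calc Ugate * A * Ugateᴴ
      = (((Real.sqrt 2 : ℂ)⁻¹)^3 * ((Real.sqrt 2 : ℂ)⁻¹)^3) • (W * A * Wᴴ) := by
        rw [hUH, hU, Matrix.smul_mul, Matrix.smul_mul, Matrix.mul_smul, smul_smul]
    _ = (((Real.sqrt 2 : ℂ)⁻¹)^3 * ((Real.sqrt 2 : ℂ)⁻¹)^3) • (O * (W * Wᴴ)) := by
        rw [h, mul_assoc]
    _ = ((((Real.sqrt 2 : ℂ)⁻¹)^3 * ((Real.sqrt 2 : ℂ)⁻¹)^3) * 8) • O := by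
        rw [hWW, Matrix.mul_smul, mul_one, smul_smul]
    _ = O := by rw [sfac, one_smul]

/-- Conjugating the single-qubit Pauli-Z operators by `U = CCZ·(H⊗H⊗H)` yields `O₃`, `O₂`, `O₁`. -/
theorem U_conjugation_of_Z :
    Ugate * (sZ ⊗ₖ ((1 : Matrix (Fin 2) (Fin 2) ℂ) ⊗ₖ (1 : Matrix (Fin 2) (Fin 2) ℂ))) * Ugateᴴ
      = O3 ∧
    Ugate * ((1 : Matrix (Fin 2) (Fin 2) ℂ) ⊗ₖ (sZ ⊗ₖ (1 : Matrix (Fin 2) (Fin 2) ℂ))) * Ugateᴴ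
      = O2 ∧
    Ugate * ((1 : Matrix (Fin 2) (Fin 2) ℂ) ⊗ₖ ((1 : Matrix (Fin 2) (Fin 2) ℂ) ⊗ₖ sZ)) * Ugateᴴ
      = O1 :=
  ⟨conj_eq _ _ hW3, conj_eq _ _ hW2, conj_eq _ _ hW1⟩
end
end

section
/- Let H₁, H₂ be finite-dimensional complex Hilbert spaces, V : H₁ → H₂ an isometry (V†V = I), A a binary observable on H₁ (self-adjoint, A² = I), B a binary observable on H₂, and ε ≥ 0. (a) If ψ is a positive semidefinite operator on H₁ with Re tr[V†BV·A·ψ] ≥ tr ψ − ε, then tr[(V†BV − A)² ψ] ≤ 2ε. (b) If ψ₂ is a positive semidefinite operator on H₂ with Re tr[VAV†·B·ψ₂] ≥ tr ψ₂ − ε, then tr[(VAV† − B)² ψ₂] ≤ 2ε. -/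
open Matrix
open scoped ComplexOrder

noncomputable section

private lemma trace_ctm_self_re_nonneg {n : Type*} [Fintype n] [DecidableEq n]
    (N : Matrix n n ℂ) : 0 ≤ ((Nᴴ * N).trace).re := by
  have h : (Nᴴ * N).trace = ∑ i, ∑ j, star (N j i) * N j i := by
    simp [Matrix.trace, Matrix.mul_apply, Matrix.conjTranspose_apply, Matrix.diag]
  rw [h, Complex.re_sum]
  refine Finset.sum_nonneg fun i _ => ?_
  rw [Complex.re_sum]
  refine Finset.sum_nonneg fun j _ => ?_
  simp only [Complex.star_def, ← Complex.normSq_eq_conj_mul_self, Complex.ofReal_re]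
  exact Complex.normSq_nonneg _

private lemma trace_mul_psd_re_nonneg {n : Type*} [Fintype n] [DecidableEq n]
    {X ψ : Matrix n n ℂ} (hX : X.PosSemidef) (hψ : ψ.PosSemidef) :
    0 ≤ ((X * ψ).trace).re := by
  open scoped MatrixOrder in
  set r := CFC.sqrt X with hr
  open scoped MatrixOrder in
  set s := CFC.sqrt ψ with hs
  open scoped MatrixOrder in
  have hXe : X = r * r := by rw [hr, ← pow_two, CFC.sq_sqrt X hX.nonneg]
  open scoped MatrixOrder in
  have hψe : ψ = s * s := by rw [hs, ← pow_two, CFC.sq_sqrt ψ hψ.nonneg]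
  open scoped MatrixOrder in
  have hherm : (r * s)ᴴ = s * r := by
    rw [Matrix.conjTranspose_mul, (CFC.sqrt_nonneg X).posSemidef.isHermitian.eq,
      (CFC.sqrt_nonneg ψ).posSemidef.isHermitian.eq]
  have key : (X * ψ).trace = ((r * s)ᴴ * (r * s)).trace := by
    rw [hXe, hψe, hherm]
    rw [show r * r * (s * s) = (r * (r * s)) * s by noncomm_ring,
      Matrix.trace_mul_comm]
    noncomm_ring
  rw [key]
  exact trace_ctm_self_re_nonneg _

private lemma key_closeness {n : Type*} [Fintype n] [DecidableEq n]
    (M A ψ : Matrix n n ℂ) (hM : M.IsHermitian) (hA : A.IsHermitian)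
    (hAsq : A * A = 1) (hMM : (1 - M * M).PosSemidef) (hψ : ψ.PosSemidef)
    (ε : ℝ) (h : ((M * A * ψ).trace).re ≥ (ψ.trace).re - ε) :
    (((M - A) * (M - A) * ψ).trace).re ≤ 2 * ε := by
  have h0 : 0 ≤ (((1 - M * M) * ψ).trace).re := trace_mul_psd_re_nonneg hMM hψ
  have h1 : ((M * M * ψ).trace).re ≤ (ψ.trace).re := by
    rw [show (1 - M * M) * ψ = ψ - M * M * ψ by noncomm_ring, Matrix.trace_sub,
      Complex.sub_re] at h0
    linarith
  have h2 : ((A * M * ψ).trace).re = ((M * A * ψ).trace).re := by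
    have e1 : (A * M * ψ)ᴴ = ψ * M * A := by
      rw [Matrix.conjTranspose_mul, Matrix.conjTranspose_mul, hψ.isHermitian.eq,
        hM.eq, hA.eq, Matrix.mul_assoc]
    have e2 : ((A * M * ψ)ᴴ).trace = star ((A * M * ψ).trace) :=
      Matrix.trace_conjTranspose _
    have e3 : (ψ * M * A).trace = (M * A * ψ).trace := by
      rw [Matrix.trace_mul_cycle, Matrix.trace_mul_cycle]
    rw [e1, e3] at e2
    have := congrArg Complex.re e2
    simpa using this.symm
  have hexp : (M - A) * (M - A) * ψ = M * M * ψ - M * A * ψ - A * M * ψ + A * A * ψ := by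
    noncomm_ring
  rw [hexp, hAsq, Matrix.one_mul, Matrix.trace_add, Matrix.trace_sub, Matrix.trace_sub,
    Complex.add_re, Complex.sub_re, Complex.sub_re]
  linarith

/-- Lemma 2.16 of Metger–Vidick: closeness of conjugated binary observables from a
state-dependent overlap bound. -/
theorem binary_observable_conjugation_closeness
    {ι κ : Type*} [Fintype ι] [DecidableEq ι] [Fintype κ] [DecidableEq κ]
    (V : Matrix κ ι ℂ) (hV : Vᴴ * V = 1)
    (A : Matrix ι ι ℂ) (hA : A.IsHermitian) (hAsq : A * A = 1)
    (B : Matrix κ κ ℂ) (hB : B.IsHermitian) (hBsq : B * B = 1)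
    (ε : ℝ) (hε : 0 ≤ ε) :
    (∀ ψ : Matrix ι ι ℂ, ψ.PosSemidef →
        ((Vᴴ * B * V * A * ψ).trace).re ≥ (ψ.trace).re - ε →
        (((Vᴴ * B * V - A) * (Vᴴ * B * V - A) * ψ).trace).re ≤ 2 * ε) ∧
    (∀ ψ₂ : Matrix κ κ ℂ, ψ₂.PosSemidef →
        ((V * A * Vᴴ * B * ψ₂).trace).re ≥ (ψ₂.trace).re - ε →
        (((V * A * Vᴴ - B) * (V * A * Vᴴ - B) * ψ₂).trace).re ≤ 2 * ε) := by
  -- the projection P = V Vᴴ and its complement C = 1 - P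
  have hP : (V * Vᴴ) * (V * Vᴴ) = V * Vᴴ := by
    rw [Matrix.mul_assoc, ← Matrix.mul_assoc Vᴴ, hV, Matrix.one_mul]
  set C : Matrix κ κ ℂ := 1 - V * Vᴴ with hCdef
  have hCherm : Cᴴ = C := by
    rw [hCdef, Matrix.conjTranspose_sub, Matrix.conjTranspose_one,
      Matrix.conjTranspose_mul, Matrix.conjTranspose_conjTranspose]
  have hCidem : C * C = C := by
    rw [hCdef, sub_mul, one_mul, mul_sub, mul_one, hP]
    abel
  have hCpsd : C.PosSemidef := by
    have := Matrix.posSemidef_conjTranspose_mul_self C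
    rwa [hCherm, hCidem] at this
  constructor
  · intro ψ hψ hov
    have hMherm : (Vᴴ * B * V).IsHermitian := by
      unfold Matrix.IsHermitian
      rw [Matrix.conjTranspose_mul, Matrix.conjTranspose_mul,
        Matrix.conjTranspose_conjTranspose, hB.eq, Matrix.mul_assoc]
    have hMM : (1 - (Vᴴ * B * V) * (Vᴴ * B * V)).PosSemidef := by
      have hpsd := hCpsd.conjTranspose_mul_mul_same (B * V)
      have hid : (B * V)ᴴ * C * (B * V) = 1 - (Vᴴ * B * V) * (Vᴴ * B * V) := by
        rw [hCdef, Matrix.conjTranspose_mul, hB.eq]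
        have e : Vᴴ * B * (1 - V * Vᴴ) * (B * V) =
            Vᴴ * ((B * B) * V) - Vᴴ * (B * (V * ((Vᴴ * B) * V))) := by
          simp only [Matrix.mul_sub, Matrix.sub_mul, Matrix.mul_one, Matrix.mul_assoc]
        rw [e, hBsq, Matrix.one_mul, hV]
        simp only [Matrix.mul_assoc]
      rwa [hid] at hpsd
    exact key_closeness _ _ _ hMherm hA hAsq hMM hψ ε hov
  · intro ψ₂ hψ₂ hov
    have hNherm : (V * A * Vᴴ).IsHermitian := by
      unfold Matrix.IsHermitian
      rw [Matrix.conjTranspose_mul, Matrix.conjTranspose_mul,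
        Matrix.conjTranspose_conjTranspose, hA.eq, Matrix.mul_assoc]
    have hNN : (1 - (V * A * Vᴴ) * (V * A * Vᴴ)).PosSemidef := by
      have hid : (V * A * Vᴴ) * (V * A * Vᴴ) = V * Vᴴ := by
        rw [show (V * A * Vᴴ) * (V * A * Vᴴ) = V * (A * ((Vᴴ * V) * (A * Vᴴ))) from by
          simp only [Matrix.mul_assoc], hV, Matrix.one_mul, ← Matrix.mul_assoc A A,
          hAsq, Matrix.one_mul]
      rw [hid]
      exact hCpsd
    exact key_closeness _ _ _ hNherm hB hBsq hNN hψ₂ ε hov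
end
end

section
/- Let H be a finite-dimensional complex Hilbert space, {M^{(a)}}_{a∈S} a finite family of pairwise-orthogonal self-adjoint projections on H with Σ_{a∈S} M^{(a)} = I (a projective measurement), s : S → {0,1}, and O := Σ_{a∈S} (−1)^{s(a)} M^{(a)}. If ψ is a positive semidefinite operator on H, a' ∈ S, and ε ≥ 0 satisfy tr[M^{(a')} ψ] ≥ tr ψ − ε, then tr[(O − (−1)^{s(a')} I)² ψ] ≤ 4ε. -/
open Matrix
open scoped ComplexOrder

noncomputable section

lemma psd_trace_re_nonneg {ι : Type*} [Fintype ι] [DecidableEq ι] {A : Matrix ι ι ℂ}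
    (hA : A.PosSemidef) : 0 ≤ (A.trace).re := by
  have h : ∀ i, 0 ≤ A i i := fun i => by
    exact hA.diag_nonneg
  have : (0:ℂ) ≤ A.trace := by
    unfold Matrix.trace
    exact Finset.sum_nonneg fun i _ => h i
  exact_mod_cast (Complex.le_def.mp this).1

lemma tr_proj_psd_nonneg {ι : Type*} [Fintype ι] [DecidableEq ι] {P ψ : Matrix ι ι ℂ}
    (hP : P.IsHermitian) (hPP : P * P = P) (hψ : ψ.PosSemidef) :
    0 ≤ ((P * ψ).trace).re := by
  have key : (P * ψ).trace = (P * ψ * Pᴴ).trace := by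
    rw [hP.eq]
    calc (P * ψ).trace = ((P * P) * ψ).trace := by rw [hPP]
    _ = (P * (P * ψ)).trace := by rw [mul_assoc]
    _ = ((P * ψ) * P).trace := trace_mul_comm _ _
    _ = (P * ψ * P).trace := rfl
  rw [key]
  exact psd_trace_re_nonneg (hψ.mul_mul_conjTranspose_same P)

lemma sign_sq_aux (v w : Fin 2) :
    ((-1 : ℂ) ^ v.val - (-1 : ℂ) ^ w.val) ^ 2 = if v = w then 0 else 4 := by
  fin_cases v <;> fin_cases w <;> norm_num

/-- If a projective measurement `{M^{(a)}}` yields a fixed outcome `a'` on `ψ` up to error `ε`,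
then the associated binary observable `O = Σ_a (−1)^{s(a)} M^{(a)}` is `(−1)^{s(a')}·I` on `ψ`
up to `4ε` in the squared state-dependent norm. -/
theorem observable_close_to_sign_of_certain_outcome
    {ι : Type*} [Fintype ι] [DecidableEq ι]
    {S : Type*} [Fintype S] [DecidableEq S]
    (M : S → Matrix ι ι ℂ)
    (hherm : ∀ a, (M a).IsHermitian)
    (hproj : ∀ a, M a * M a = M a)
    (horth : ∀ a b, a ≠ b → M a * M b = 0)
    (hsum : ∑ a, M a = 1)
    (s : S → Fin 2)
    (ψ : Matrix ι ι ℂ) (hψ : ψ.PosSemidef)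
    (a' : S) (ε : ℝ) (hε : 0 ≤ ε)
    (h : ((M a' * ψ).trace).re ≥ (ψ.trace).re - ε) :
    let O : Matrix ι ι ℂ := ∑ a, ((-1 : ℂ) ^ (s a).val) • M a
    (((O - ((-1 : ℂ) ^ (s a').val) • 1) * (O - ((-1 : ℂ) ^ (s a').val) • 1) * ψ).trace).re
      ≤ 4 * ε := by
  intro O
  set c : ℂ := (-1 : ℂ) ^ (s a').val with hc
  set d : S → ℂ := fun a => (-1 : ℂ) ^ (s a).val - c with hd
  have hD : O - c • 1 = ∑ a, d a • M a := by
    rw [← hsum]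
    simp only [O, Finset.smul_sum, ← Finset.sum_sub_distrib, hd, sub_smul]
  have hDD : (O - c • 1) * (O - c • 1) = ∑ a, (d a ^ 2) • M a := by
    rw [hD, Finset.sum_mul_sum]
    rw [Finset.sum_congr rfl (fun a _ => ?_)]
    rw [Finset.sum_eq_single a]
    · rw [smul_mul_smul_comm, hproj, sq]
    · intro b _ hb
      rw [smul_mul_smul_comm, horth a b (Ne.symm hb), smul_zero]
    · intro habs; exact absurd (Finset.mem_univ a) habs
  have hcoef : ∀ a, d a ^ 2 = if s a = s a' then 0 else 4 := fun a =>
    sign_sq_aux (s a) (s a')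
  have htr : (((O - c • 1) * (O - c • 1) * ψ).trace).re
      = ∑ a, (if s a = s a' then (0:ℝ) else 4) * ((M a * ψ).trace).re := by
    rw [hDD, Finset.sum_mul, trace_sum, Complex.re_sum]
    refine Finset.sum_congr rfl fun a _ => ?_
    rw [smul_mul_assoc, trace_smul, hcoef a]
    by_cases hsa : s a = s a' <;> simp [hsa]
  rw [htr]
  have hnn : ∀ a, 0 ≤ ((M a * ψ).trace).re := fun a =>
    tr_proj_psd_nonneg (hherm a) (hproj a) hψ
  have hsum_tr : ∑ a, ((M a * ψ).trace).re = (ψ.trace).re := by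
    rw [← Complex.re_sum, ← trace_sum, ← Finset.sum_mul, hsum, one_mul]
  have step1 : ∑ a, (if s a = s a' then (0:ℝ) else 4) * ((M a * ψ).trace).re
      ≤ ∑ a ∈ Finset.univ.erase a', 4 * ((M a * ψ).trace).re := by
    have h0 : (if s a' = s a' then (0:ℝ) else 4) * ((M a' * ψ).trace).re = 0 := by simp
    rw [← Finset.add_sum_erase Finset.univ
      (fun a => (if s a = s a' then (0:ℝ) else 4) * ((M a * ψ).trace).re)
      (Finset.mem_univ a'), h0, zero_add]
    refine Finset.sum_le_sum fun a _ => ?_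
    split_ifs
    · nlinarith [hnn a]
    · exact le_rfl
  have step2 : ∑ a ∈ Finset.univ.erase a', 4 * ((M a * ψ).trace).re
      = 4 * ((ψ.trace).re - ((M a' * ψ).trace).re) := by
    rw [← Finset.mul_sum]
    congr 1
    rw [← hsum_tr, Finset.sum_erase_eq_sub (Finset.mem_univ a')]
  linarith [step1, step2.le, h]
end
end

section
/- Let H₁, H₂ be finite-dimensional complex Hilbert spaces, V : H₁ → H₂ an isometry (V†V = I), A a binary observable on H₁ (self-adjoint, A² = I), B a binary observable on H₂, and ψ a positive semidefinite operator on H₁. Then tr[(A − V†BV)² ψ] ≤ tr[(VAV† − B)² (VψV†)]. In particular, if ‖VAV† − B‖_{VψV†}² ≤ ε then ‖A − V†BV‖_ψ² ≤ ε. -/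
open Matrix
open scoped ComplexOrder

noncomputable section

set_option linter.unusedVariables false in
lemma trace_conj_self_re_nonneg {m n : Type*} [Fintype m] [Fintype n]
    (X : Matrix m n ℂ) : 0 ≤ ((Xᴴ * X).trace).re := by
  have : (Xᴴ * X).trace = ∑ i, ∑ j, (starRingEnd ℂ) (X j i) * X j i := by
    simp [Matrix.trace, Matrix.mul_apply, Matrix.diag, Matrix.conjTranspose_apply]
  rw [this]
  simp only [Complex.re_sum]
  apply Finset.sum_nonneg; intro i _
  apply Finset.sum_nonneg; intro j _
  rw [show (starRingEnd ℂ) (X j i) * X j i = Complex.normSq (X j i) by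
    rw [mul_comm, Complex.mul_conj]]
  rw [Complex.ofReal_re]; exact Complex.normSq_nonneg _


/-- Lemma 2.23 of Metger–Vidick: pulling a closeness statement through an isometry,
`tr[(A − V†BV)² ψ] ≤ tr[(VAV† − B)² (VψV†)]`; in particular
`‖VAV† − B‖_{VψV†}² ≤ ε` implies `‖A − V†BV‖_ψ² ≤ ε`. -/
theorem state_norm_pullback_through_isometry
    {ι κ : Type*} [Fintype ι] [DecidableEq ι] [Fintype κ] [DecidableEq κ]
    (V : Matrix κ ι ℂ) (hV : Vᴴ * V = 1)
    (A : Matrix ι ι ℂ) (hA : A.IsHermitian) (hAsq : A * A = 1)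
    (B : Matrix κ κ ℂ) (hB : B.IsHermitian) (hBsq : B * B = 1)
    (ψ : Matrix ι ι ℂ) (hψ : ψ.PosSemidef) :
    (((A - Vᴴ * B * V) * (A - Vᴴ * B * V) * ψ).trace).re
        ≤ (((V * A * Vᴴ - B) * (V * A * Vᴴ - B) * (V * ψ * Vᴴ)).trace).re ∧
    ∀ ε : ℝ,
      (((V * A * Vᴴ - B) * (V * A * Vᴴ - B) * (V * ψ * Vᴴ)).trace).re ≤ ε →
      (((A - Vᴴ * B * V) * (A - Vᴴ * B * V) * ψ).trace).re ≤ ε := by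
  have hVc : ∀ C : Matrix ι ι ℂ, Vᴴ * (V * C) = C := fun C => by
    rw [← Matrix.mul_assoc, hV, Matrix.one_mul]
  have hBc : ∀ C : Matrix κ ι ℂ, B * (B * C) = C := fun C => by
    rw [← Matrix.mul_assoc, hBsq, Matrix.one_mul]
  set M := Vᴴ * B * V with hM
  set X := (1 - V * Vᴴ) * B * V with hX
  -- X†X = 1 - M²
  have hXH : Xᴴ = Vᴴ * B * (1 - V * Vᴴ) := by
    simp [hX, Matrix.conjTranspose_mul, Matrix.conjTranspose_sub, hB.eq,
      Matrix.mul_assoc]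
  have hXX : Xᴴ * X = 1 - M * M := by
    rw [hXH, hX, hM]
    simp only [Matrix.mul_sub, Matrix.sub_mul, Matrix.one_mul, Matrix.mul_one,
      Matrix.mul_assoc, hVc, hBc, hV]
    abel
  -- key algebraic identity
  have key : Vᴴ * ((V * A * Vᴴ - B) * (V * A * Vᴴ - B)) * V
      = (A - M) * (A - M) + (1 - M * M) := by
    rw [hM]
    simp only [Matrix.mul_sub, Matrix.sub_mul, Matrix.one_mul, Matrix.mul_one,
      Matrix.mul_add, Matrix.add_mul, Matrix.mul_assoc, hVc, hBc, hV,
      show ∀ C : Matrix ι ι ℂ, A * (A * C) = C from fun C => by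
        rw [← Matrix.mul_assoc, hAsq, Matrix.one_mul]]
    abel
  obtain ⟨s, hss, hsH⟩ : ∃ s : Matrix ι ι ℂ, s * s = ψ ∧ sᴴ = s := by
    open scoped MatrixOrder Matrix.Norms.L2Operator in
    exact ⟨CFC.sqrt ψ, CFC.sqrt_mul_sqrt_self ψ hψ.nonneg, (CFC.sqrt_nonneg ψ).posSemidef.1⟩
  -- trace identity via cyclicity
  have tr1 : ((V * A * Vᴴ - B) * (V * A * Vᴴ - B) * (V * ψ * Vᴴ)).trace
      = ((A - M) * (A - M) * ψ).trace + ((1 - M * M) * ψ).trace := by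
    have : (V * A * Vᴴ - B) * (V * A * Vᴴ - B) * (V * ψ * Vᴴ)
        = ((V * A * Vᴴ - B) * (V * A * Vᴴ - B) * V * ψ) * Vᴴ := by
      simp only [Matrix.mul_assoc]
    rw [this, Matrix.trace_mul_comm, ← Matrix.mul_assoc, ← Matrix.mul_assoc,
      show Vᴴ * ((V * A * Vᴴ - B) * (V * A * Vᴴ - B)) = Vᴴ * ((V * A * Vᴴ - B) * (V * A * Vᴴ - B)) from rfl]
    rw [show Vᴴ * ((V * A * Vᴴ - B) * (V * A * Vᴴ - B)) * V * ψ
        = (Vᴴ * ((V * A * Vᴴ - B) * (V * A * Vᴴ - B)) * V) * ψ from by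
      simp only [Matrix.mul_assoc]]
    rw [key, Matrix.add_mul, Matrix.trace_add]
  -- second term has nonneg real part
  have h2 : 0 ≤ (((1 - M * M) * ψ).trace).re := by
    have e1 : (1 - M * M) * ψ = (Xᴴ * X * s) * s := by
      rw [← hss, ← hXX]; simp only [Matrix.mul_assoc]
    have e2 : (X * s)ᴴ * (X * s) = s * (Xᴴ * X * s) := by
      rw [Matrix.conjTranspose_mul, hsH]; simp only [Matrix.mul_assoc]
    rw [e1, Matrix.trace_mul_comm, ← e2]
    exact trace_conj_self_re_nonneg (X * s)
  have hle : (((A - M) * (A - M) * ψ).trace).re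
      ≤ (((V * A * Vᴴ - B) * (V * A * Vᴴ - B) * (V * ψ * Vᴴ)).trace).re := by
    rw [tr1, Complex.add_re]
    linarith
  exact ⟨hle, fun ε hε => le_trans hle hε⟩
end
end

section
/- Let p, ε ∈ [0,1] be real numbers, let n ≥ 1 be a natural number, let x ∈ (0,1) be real, and set s := n + x. Then (p+ε)^s ≤ p^s + (2·2^s − 1)·ε^x, and, if in addition ε ≤ p, then (p−ε)^s ≥ p^s − 2^s·ε^x. -/
/-- subadditivity of `x`-th power for `0 ≤ x ≤ 1` on nonneg reals -/
lemma rpow_add_le_add_rpow_real (a b : ℝ) (ha : 0 ≤ a) (hb : 0 ≤ b) (x : ℝ)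
    (hx0 : 0 ≤ x) (hx1 : x ≤ 1) : (a + b) ^ x ≤ a ^ x + b ^ x := by
  lift a to NNReal using ha
  lift b to NNReal using hb
  have := NNReal.rpow_add_le_add_rpow a b hx0 hx1
  push_cast [← NNReal.coe_rpow] at this ⊢
  exact_mod_cast this

/-- `(p+ε)^n ≤ p^n + (2^n - 1) ε` for `p, ε ∈ [0,1]`. -/
lemma pow_add_le (p ε : ℝ) (hp0 : 0 ≤ p) (hp1 : p ≤ 1) (hε0 : 0 ≤ ε) (hε1 : ε ≤ 1) :
    ∀ n : ℕ, (p + ε) ^ n ≤ p ^ n + (2 ^ n - 1) * ε := by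
  intro n
  induction n with
  | zero => simp
  | succ m ih =>
    have hpe : 0 ≤ p + ε := by linarith
    have hpm : p ^ m ≤ 1 := pow_le_one₀ hp0 hp1
    have h2 : (1:ℝ) ≤ 2 ^ m := one_le_pow₀ (by norm_num)
    have hppow : 0 ≤ p ^ m := pow_nonneg hp0 m
    have step1 : (p + ε) * (p + ε) ^ m ≤ (p + ε) * (p ^ m + (2 ^ m - 1) * ε) :=
      mul_le_mul_of_nonneg_left ih hpe
    have e1 : p * ((2 ^ m - 1) * ε) ≤ (2 ^ m - 1) * ε := by
      nlinarith [mul_nonneg (sub_nonneg.2 h2) hε0]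
    have e2 : ε * p ^ m ≤ ε := by nlinarith
    have e3 : ε * ((2 ^ m - 1) * ε) ≤ (2 ^ m - 1) * ε := by
      nlinarith [mul_nonneg (sub_nonneg.2 h2) hε0]
    calc (p + ε) ^ (m + 1) = (p + ε) * (p + ε) ^ m := by ring
      _ ≤ (p + ε) * (p ^ m + (2 ^ m - 1) * ε) := step1
      _ = p ^ (m + 1) + (p * ((2 ^ m - 1) * ε) + ε * p ^ m + ε * ((2 ^ m - 1) * ε)) := by
          ring
      _ ≤ p ^ (m + 1) + (2 ^ (m + 1) - 1) * ε := by
          have : ((2:ℝ) ^ (m + 1) - 1) * ε = (2 ^ m - 1) * ε + ε + (2 ^ m - 1) * ε := by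
            ring
          linarith

/-- `a^n - b^n ≤ n (a - b)` for `0 ≤ b ≤ a ≤ 1`. -/
lemma pow_sub_pow_le (a b : ℝ) (hb0 : 0 ≤ b) (hba : b ≤ a) (ha1 : a ≤ 1) :
    ∀ n : ℕ, a ^ n ≤ b ^ n + n * (a - b) := by
  intro n
  induction n with
  | zero => simp
  | succ m ih =>
    have ha0 : 0 ≤ a := le_trans hb0 hba
    have hbm : b ^ m ≤ 1 := pow_le_one₀ hb0 (le_trans hba ha1)
    have hbm0 : 0 ≤ b ^ m := pow_nonneg hb0 m
    have e1 : (a - b) * b ^ m ≤ a - b := by nlinarith [sub_nonneg.2 hba]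
    have e2 : a * ((m:ℝ) * (a - b)) ≤ (m:ℝ) * (a - b) := by
      nlinarith [mul_nonneg (Nat.cast_nonneg (α := ℝ) m) (sub_nonneg.2 hba)]
    calc a ^ (m + 1) = a * a ^ m := by ring
      _ ≤ a * (b ^ m + m * (a - b)) := mul_le_mul_of_nonneg_left ih ha0
      _ = b ^ (m + 1) + ((a - b) * b ^ m + a * ((m:ℝ) * (a - b))) := by ring
      _ ≤ b ^ (m + 1) + ((m:ℝ) + 1) * (a - b) := by linarith
      _ = b ^ (m + 1) + ((m + 1 : ℕ) : ℝ) * (a - b) := by push_cast; ring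

/-- Real-power perturbation bounds used in the proof-of-magic protocol: for `p, ε ∈ [0,1]` and a
non-integer exponent `s = n + x` with `n ≥ 1` a natural number and `x ∈ (0,1)`,
`(p+ε)^s ≤ p^s + (2·2^s − 1)·ε^x`, and if moreover `ε ≤ p` then `(p−ε)^s ≥ p^s − 2^s·ε^x`. -/
theorem rpow_perturbation_bounds
    (p ε : ℝ) (hp0 : 0 ≤ p) (hp1 : p ≤ 1) (hε0 : 0 ≤ ε) (hε1 : ε ≤ 1)
    (n : ℕ) (hn : 1 ≤ n) (x : ℝ) (hx0 : 0 < x) (hx1 : x < 1) :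
    (p + ε) ^ ((n : ℝ) + x) ≤ p ^ ((n : ℝ) + x) + (2 * 2 ^ ((n : ℝ) + x) - 1) * ε ^ x ∧
    (ε ≤ p → (p - ε) ^ ((n : ℝ) + x) ≥ p ^ ((n : ℝ) + x) - 2 ^ ((n : ℝ) + x) * ε ^ x) := by
  have hs0 : (0:ℝ) < (n : ℝ) + x := by positivity
  have hsne : (n : ℝ) + x ≠ 0 := ne_of_gt hs0
  have hεx0 : 0 ≤ ε ^ x := Real.rpow_nonneg hε0 x
  have hεx1 : ε ^ x ≤ 1 := Real.rpow_le_one hε0 hε1 hx0.le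
  -- ε ≤ ε^x
  have hεle : ε ≤ ε ^ x := by
    rcases eq_or_lt_of_le hε0 with h | h
    · simp [← h]; positivity
    · calc ε = ε ^ (1:ℝ) := (Real.rpow_one ε).symm
        _ ≤ ε ^ x := Real.rpow_le_rpow_of_exponent_ge h hε1 hx1.le
  -- 2^n ≤ 2^(n+x)
  have h2s : (2:ℝ) ^ (n:ℝ) ≤ 2 ^ ((n:ℝ) + x) :=
    Real.rpow_le_rpow_of_exponent_le (by norm_num) (by linarith)
  have h2n : (2:ℝ) ^ (n:ℝ) = 2 ^ n := Real.rpow_natCast 2 n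
  -- split rpow into nat pow times rpow
  have split : ∀ a : ℝ, 0 ≤ a → a ^ ((n:ℝ) + x) = a ^ n * a ^ x := by
    intro a ha
    rw [Real.rpow_add' ha hsne, Real.rpow_natCast]
  have hn1 : (n:ℝ) + 1 ≤ 2 ^ n := by
    have h : n + 1 ≤ 2 ^ n := Nat.lt_two_pow_self (n := n)
    exact_mod_cast h
  constructor
  · -- upper bound
    have hpe : 0 ≤ p + ε := by linarith
    have h1 := pow_add_le p ε hp0 hp1 hε0 hε1 n
    have h2 := rpow_add_le_add_rpow_real p ε hp0 hε0 x hx0.le hx1.le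
    have hpx0 : 0 ≤ p ^ x := Real.rpow_nonneg hp0 x
    have hpx1 : p ^ x ≤ 1 := Real.rpow_le_one hp0 hp1 hx0.le
    have hpn0 : 0 ≤ p ^ n := pow_nonneg hp0 n
    have hpn1 : p ^ n ≤ 1 := pow_le_one₀ hp0 hp1
    have h2n1 : (1:ℝ) ≤ 2 ^ n := one_le_pow₀ (by norm_num)
    have key : (p + ε) ^ ((n:ℝ) + x) ≤ (p ^ n + (2 ^ n - 1) * ε) * (p ^ x + ε ^ x) := by
      rw [split (p + ε) hpe]
      apply mul_le_mul h1 h2 (Real.rpow_nonneg hpe x)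
      nlinarith
    have expand : (p ^ n + (2 ^ n - 1) * ε) * (p ^ x + ε ^ x)
        ≤ p ^ n * p ^ x + (2 * 2 ^ (n:ℝ) - 1) * ε ^ x := by
      rw [h2n]
      nlinarith [mul_le_mul_of_nonneg_left hεle (sub_nonneg.2 h2n1),
        mul_le_mul_of_nonneg_right hpx1 (mul_nonneg (sub_nonneg.2 h2n1) hε0),
        mul_le_mul_of_nonneg_left hεx1 (mul_nonneg (sub_nonneg.2 h2n1) hε0),
        mul_le_mul_of_nonneg_right hpn1 hεx0,
        mul_nonneg (sub_nonneg.2 h2n1) hε0]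
    rw [split p hp0]
    calc (p + ε) ^ ((n:ℝ) + x) ≤ p ^ n * p ^ x + (2 * 2 ^ (n:ℝ) - 1) * ε ^ x :=
          key.trans expand
      _ ≤ p ^ n * p ^ x + (2 * 2 ^ ((n:ℝ) + x) - 1) * ε ^ x := by nlinarith
  · -- lower bound
    intro hεp
    set q := p - ε with hq
    have hq0 : 0 ≤ q := by simp [hq]; linarith
    have hqp : q ≤ p := by simp [hq]; linarith
    have hq1 : q ≤ 1 := le_trans hqp hp1
    have h1 := pow_sub_pow_le p q hq0 hqp hp1 n
    have h2 : p ^ x ≤ q ^ x + ε ^ x := by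
      have := rpow_add_le_add_rpow_real q ε hq0 hε0 x hx0.le hx1.le
      have hpq : q + ε = p := by simp [hq]
      rwa [hpq] at this
    have hpx0 : 0 ≤ p ^ x := Real.rpow_nonneg hp0 x
    have hqx0 : 0 ≤ q ^ x := Real.rpow_nonneg hq0 x
    have hqx1 : q ^ x ≤ 1 := Real.rpow_le_one hq0 hq1 hx0.le
    have hpn0 : 0 ≤ p ^ n := pow_nonneg hp0 n
    have hpn1 : p ^ n ≤ 1 := pow_le_one₀ hp0 hp1
    have hqn0 : 0 ≤ q ^ n := pow_nonneg hq0 n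
    have hqn1 : q ^ n ≤ 1 := pow_le_one₀ hq0 hq1
    -- p^n p^x - q^n q^x ≤ p^n(p^x - q^x) + q^x(p^n - q^n) ≤ ε^x + n ε ≤ (n+1) ε^x
    have key : p ^ n * p ^ x ≤ q ^ n * q ^ x + ((n:ℝ) + 1) * ε ^ x := by
      have hεn : (n:ℝ) * ε ≤ (n:ℝ) * ε ^ x :=
        mul_le_mul_of_nonneg_left hεle (Nat.cast_nonneg n)
      have hpamb : p - q = ε := by simp [hq]
      nlinarith [mul_le_mul_of_nonneg_left h2 hpn0,
        mul_le_mul_of_nonneg_right h1 hqx0,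
        mul_le_mul_of_nonneg_left hpn1 hεx0,
        mul_le_mul_of_nonneg_left hqx1 (mul_nonneg (Nat.cast_nonneg n)
          (sub_nonneg.2 hqp))]
    have hconst : ((n:ℝ) + 1) * ε ^ x ≤ 2 ^ ((n:ℝ) + x) * ε ^ x := by
      apply mul_le_mul_of_nonneg_right _ hεx0
      calc (n:ℝ) + 1 ≤ 2 ^ n := hn1
        _ = 2 ^ (n:ℝ) := h2n.symm
        _ ≤ 2 ^ ((n:ℝ) + x) := h2s
    rw [ge_iff_le, split p hp0, split q hq0]
    linarith
end
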